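/- Let f, g, f̃, g̃ ∈ 𝒜. If S_n(f̃, g̃) = S_n(f, g) for every integer n ≥ 1, then ⟨f̃^n, g̃^n⟩ = ⟨f^n, g^n⟩ for every integer n ≥ 1. (This is Lemma 8 of the paper: if all the n-particle inner products ⟨B_{f̃}^{+n}Φ, B_{g̃}^{+n}Φ⟩ and ⟨B_f^{+n}Φ, B_g^{+n}Φ⟩ agree, then all the power inner products agree; applied with f̃ = Tf, g̃ = Tg it says that if Γ₂(T) is unitary then ⟨(Tf)^n,(Tg)^n⟩ = ⟨f^n,g^n⟩.) -/

import Mathlib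

open MeasureTheory Complex Finset
open scoped Nat ENNReal

noncomputable section

/-- The domain `ℝ^d`. -/
abbrev Dom (d : ℕ) := Fin d → ℝ

/-- Membership in `𝒜 = L²(ℝ^d) ∩ L^∞(ℝ^d)`. -/
def MemA (d : ℕ) (f : Dom d → ℂ) : Prop :=
  MemLp f 2 (volume : Measure (Dom d)) ∧ MemLp f ⊤ (volume : Measure (Dom d))

/-- `⟨f^k, g^k⟩`, the power inner products. -/
def pip (d : ℕ) (f g : Dom d → ℂ) (k : ℕ) : ℂ :=
  ∫ x : Dom d, (starRingEnd ℂ) (f x) ^ k * g x ^ k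

/-- `S_n(f,g)`, the inner product of quadratic `n`-particle vectors. -/
def Sker (c : ℝ) (d : ℕ) (f g : Dom d → ℂ) (n : ℕ) : ℂ :=
  ∑ p : Nat.Partition n,
    (n ! : ℂ) ^ 2 * 2 ^ (2 * n - 1) *
      ∏ j ∈ p.parts.toFinset,
        (c : ℂ) ^ p.parts.count j /
            (((p.parts.count j)! : ℂ) * (j : ℂ) ^ p.parts.count j) *
          pip d f g j ^ p.parts.count j

/-- `K(f,g) = ⟨Ψ(f),Ψ(g)⟩`, the inner product of quadratic exponential vectors. -/
def Kker (c : ℝ) (d : ℕ) (f g : Dom d → ℂ) : ℂ :=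
  Complex.exp (-(c / 2 : ℂ) *
    ∫ x : Dom d, Complex.log (1 - 4 * (starRingEnd ℂ) (f x) * g x))

/-!
`S_n` is a sum over the partitions of `n`. The one-part partition `{n}` contributes a nonzero
multiple of `⟨f^n, g^n⟩`, and every other partition only involves `⟨f^j, g^j⟩` with `j < n`.
So the sequence `(S_n)` determines the sequence `(⟨f^n, g^n⟩)` by induction on `n`.
-/

namespace Nat.Partition

theorem eq_indiscrete_of_mem_parts {n : ℕ} {p : Partition n} (h : n ∈ p.parts) :
    p = indiscrete n := by
  have hn : n ≠ 0 := (p.parts_pos h).ne'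
  have hcons : p.parts = n ::ₘ p.parts.erase n := (Multiset.cons_erase h).symm
  have hsum : (p.parts.erase n).sum = 0 := by
    have := p.parts_sum
    rw [hcons, Multiset.sum_cons] at this
    omega
  have hrest : p.parts.erase n = 0 :=
    Multiset.eq_zero_of_forall_notMem fun m hm =>
      (p.parts_pos (Multiset.mem_of_mem_erase hm)).ne'
        (Multiset.sum_eq_zero_iff.mp hsum m hm)
  ext1
  rw [hcons, hrest, indiscrete_parts hn]
  rfl

theorem lt_of_mem_parts_of_ne_indiscrete {n m : ℕ} {p : Partition n}
    (hp : p ≠ indiscrete n) (hm : m ∈ p.parts) : m < n :=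
  (le_of_mem_parts hm).lt_of_ne fun h => hp (eq_indiscrete_of_mem_parts (h ▸ hm))

end Nat.Partition

def skerTerm (c : ℝ) (a : ℕ → ℂ) {n : ℕ} (p : Nat.Partition n) : ℂ :=
  (n ! : ℂ) ^ 2 * 2 ^ (2 * n - 1) *
    ∏ j ∈ p.parts.toFinset,
      (c : ℂ) ^ p.parts.count j / (((p.parts.count j)! : ℂ) * (j : ℂ) ^ p.parts.count j) *
        a j ^ p.parts.count j

theorem Sker_eq_sum_skerTerm (c : ℝ) (d : ℕ) (f g : Dom d → ℂ) (n : ℕ) :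
    Sker c d f g n = ∑ p : Nat.Partition n, skerTerm c (pip d f g) p :=
  rfl

theorem skerTerm_indiscrete (c : ℝ) (a : ℕ → ℂ) {n : ℕ} (hn : n ≠ 0) :
    skerTerm c a (Nat.Partition.indiscrete n) =
      (n ! : ℂ) ^ 2 * 2 ^ (2 * n - 1) * ((c : ℂ) / n) * a n := by
  simp [skerTerm, Nat.Partition.indiscrete_parts hn, mul_assoc, div_eq_mul_inv]

theorem skerTerm_congr (c : ℝ) {a b : ℕ → ℂ} {n : ℕ} (p : Nat.Partition n)
    (hab : ∀ j ∈ p.parts, a j = b j) : skerTerm c a p = skerTerm c b p := by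
  unfold skerTerm
  congr 1
  refine Finset.prod_congr rfl fun j hj => ?_
  rw [hab j (Multiset.mem_toFinset.mp hj)]

theorem sum_skerTerm_eq_add (c : ℝ) (a : ℕ → ℂ) {n : ℕ} (hn : n ≠ 0) :
    ∑ p : Nat.Partition n, skerTerm c a p =
      (n ! : ℂ) ^ 2 * 2 ^ (2 * n - 1) * ((c : ℂ) / n) * a n +
        ∑ p ∈ univ.erase (Nat.Partition.indiscrete n), skerTerm c a p := by
  rw [← add_sum_erase _ _ (mem_univ _), skerTerm_indiscrete c a hn]

theorem eq_of_sum_skerTerm_eq {c : ℝ} (hc : c ≠ 0) {a b : ℕ → ℂ}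
    (h : ∀ n : ℕ, 1 ≤ n → ∑ p : Nat.Partition n, skerTerm c a p =
      ∑ p : Nat.Partition n, skerTerm c b p) :
    ∀ n : ℕ, 1 ≤ n → a n = b n := by
  intro n
  induction n using Nat.strong_induction_on with
  | _ n ih =>
  intro hn
  have hn0 : n ≠ 0 := by omega
  have hlower : ∀ p ∈ univ.erase (Nat.Partition.indiscrete n),
      skerTerm c a p = skerTerm c b p := fun p hp =>
    skerTerm_congr c p fun j hj =>
      ih j (p.lt_of_mem_parts_of_ne_indiscrete (mem_erase.mp hp).1 hj) (p.parts_pos hj)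
  have hlead : (n ! : ℂ) ^ 2 * 2 ^ (2 * n - 1) * ((c : ℂ) / n) ≠ 0 := by
    have hfact : (n ! : ℂ) ≠ 0 := Nat.cast_ne_zero.mpr n.factorial_ne_zero
    exact mul_ne_zero (mul_ne_zero (pow_ne_zero _ hfact) (pow_ne_zero _ two_ne_zero))
      (div_ne_zero (ofReal_ne_zero.mpr hc) (Nat.cast_ne_zero.mpr hn0))
  have := h n hn
  rw [sum_skerTerm_eq_add c a hn0, sum_skerTerm_eq_add c b hn0, sum_congr rfl hlower] at this
  exact mul_left_cancel₀ hlead (add_right_cancel this)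

theorem statement9 (d : ℕ) (c : ℝ) (hc : 0 < c)
    (f g ft gt : Dom d → ℂ)
    (hS : ∀ n : ℕ, 1 ≤ n → Sker c d ft gt n = Sker c d f g n) :
    ∀ n : ℕ, 1 ≤ n → pip d ft gt n = pip d f g n :=
  eq_of_sum_skerTerm_eq hc.ne' fun n hn => by
    simpa only [Sker_eq_sum_skerTerm] using hS n hn
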